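/- arXiv:2310.15152 — 5 statements merged into one kernel-verified Lean document; each statement's English description precedes it below -/
import Mathlib

section
/- Let G be a connected graph with N vertices and let k ≥ 1. The number of k-forests of G is at most C(N−1, k−1) times the number of spanning trees of G, where C(·,·) denotes the binomial coefficient. (Every k-forest is obtained from some spanning tree by deleting k−1 of its N−1 edges.) -/
/-- `T` is a spanning tree of `G`, given by its edge set: the spanning subgraph
with edge set `T` is a tree (connected and acyclic). -/
def IsSpanningTreeOf {V : Type*} (G : SimpleGraph V) (T : Set (Sym2 V)) : Prop :=
  T ⊆ G.edgeSet ∧ (SimpleGraph.fromEdgeSet T).IsTree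

/-- `F` is a `k`-forest of `G`: a spanning subgraph (given by its edge set) that is
acyclic and has exactly `k` connected components. -/
def IsKForestOf {V : Type*} (G : SimpleGraph V) (k : ℕ) (F : Set (Sym2 V)) : Prop :=
  F ⊆ G.edgeSet ∧ (SimpleGraph.fromEdgeSet F).IsAcyclic ∧
    Nat.card (SimpleGraph.fromEdgeSet F).ConnectedComponent = k

/-!
Every `k`-forest `F` of a connected graph extends to a spanning tree `T`. An acyclic graph on
`N` vertices with `c` components has `N - c` edges, so `T \ F` consists of exactly `k - 1` of
the `N - 1` edges of `T`. Thus every `k`-forest is `T \ D` for some spanning tree `T` and some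
`(k - 1)`-subset `D` of its edges, and there are at most `C(N - 1, k - 1)` such `D` per tree.
-/

namespace SimpleGraph

variable {V : Type*} {G : SimpleGraph V} {u v : V}

lemma Reachable.of_sup_edge {x y : V} (h : (G ⊔ edge u v).Reachable x y) :
    G.Reachable x y ∨ G.Reachable x u ∧ G.Reachable v y ∨ G.Reachable x v ∧ G.Reachable u y := by
  obtain ⟨p⟩ := h
  induction p with
  | nil => exact .inl .rfl
  | @cons a b c hadj _ ih =>
    rcases hadj with hab | hab
    · have := hab.reachable
      grind [Reachable.trans]
    · rw [edge_adj] at hab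
      grind [Reachable.refl, Reachable.trans, Reachable.symm]

lemma card_connectedComponent_sup_edge [Finite V] (h : ¬G.Reachable u v) :
    Nat.card (G ⊔ edge u v).ConnectedComponent + 1 = Nat.card G.ConnectedComponent := by
  set f := ConnectedComponent.map (Hom.ofLE (le_sup_left : G ≤ G ⊔ edge u v))
  set d := G.connectedComponentMk v
  have hinj : Set.InjOn f {d}ᶜ := by
    intro x hx y hy hxy
    induction x using ConnectedComponent.ind
    induction y using ConnectedComponent.ind
    simp only [Set.mem_compl_iff, Set.mem_singleton_iff, ConnectedComponent.eq, d] at hx hy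
    rcases (ConnectedComponent.exact hxy).of_sup_edge with hab | ⟨-, hvb⟩ | ⟨hav, -⟩
    · exact ConnectedComponent.sound hab
    · exact absurd hvb.symm hy
    · exact absurd hav hx
  have himage : f '' {d}ᶜ = Set.univ := by
    refine Set.eq_univ_of_forall fun c => ?_
    induction c using ConnectedComponent.ind with | h w => ?_
    by_cases hw : G.Reachable w v
    · refine ⟨G.connectedComponentMk u, fun hu => h (ConnectedComponent.exact hu), ?_⟩
      have huv : (G ⊔ edge u v).Adj u v :=
        .inr <| (edge_adj ..).2 ⟨by simp, fun huv => h (huv ▸ .rfl)⟩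
      exact ConnectedComponent.sound (huv.reachable.trans (hw.mono le_sup_left).symm)
    · exact ⟨_, fun hw' => hw (ConnectedComponent.exact hw'), rfl⟩
  rw [← Set.ncard_univ, ← himage, hinj.ncard_image,
    ← Set.ncard_add_ncard_compl {d}, Set.ncard_singleton, add_comm]

lemma card_connectedComponent_bot :
    Nat.card (⊥ : SimpleGraph V).ConnectedComponent = Nat.card V :=
  Nat.card_eq_of_bijective _ ⟨fun _ _ h => reachable_bot.mp (ConnectedComponent.exact h),
    Quot.mk_surjective⟩ |>.symm

lemma IsAcyclic.ncard_edgeSet_add_card_connectedComponent [Finite V] (hG : G.IsAcyclic) :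
    G.edgeSet.ncard + Nat.card G.ConnectedComponent = Nat.card V := by
  induction hn : G.edgeSet.ncard generalizing G with
  | zero =>
    obtain rfl : G = ⊥ := edgeSet_eq_empty.mp <| (Set.ncard_eq_zero (Set.toFinite _)).mp hn
    rw [zero_add, card_connectedComponent_bot]
  | succ n ih =>
    obtain ⟨e, he⟩ := Set.nonempty_of_ncard_ne_zero (hn.trans_ne n.succ_ne_zero)
    obtain ⟨a, b⟩ := e
    set G' := G.deleteEdges {s(a, b)}
    have hbridge : ¬G'.Reachable a b := isAcyclic_iff_forall_adj_isBridge.mp hG he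
    have hsup : G' ⊔ edge a b = G := sdiff_sup_cancel (G.edge_le_iff.mpr (.inr he))
    have hcard : G'.edgeSet.ncard = n := by
      rw [edgeSet_deleteEdges, Set.ncard_sdiff_singleton_of_mem he, hn, Nat.add_sub_cancel]
    have hG' : n + Nat.card G'.ConnectedComponent = Nat.card V :=
      ih (hG.anti (deleteEdges_le _)) hcard
    have := card_connectedComponent_sup_edge hbridge
    rw [hsup] at this
    omega

lemma edgeSet_fromEdgeSet_of_subset {s : Set (Sym2 V)} (hs : s ⊆ G.edgeSet) :
    (fromEdgeSet s).edgeSet = s := by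
  rw [edgeSet_fromEdgeSet, sdiff_eq_left, ← Set.subset_compl_iff_disjoint_right]
  exact hs.trans G.edgeSet_subset_compl_diagSet

end SimpleGraph

namespace Set

lemma ncard_le_mul_ncard_of_subset_biUnion {α ι : Type*} [Finite α] {s : Set α} {t : Set ι}
    (ht : t.Finite) {f : ι → Set α} {n : ℕ} (hs : s ⊆ ⋃ i ∈ t, f i)
    (hf : ∀ i ∈ t, (f i).ncard ≤ n) : s.ncard ≤ n * t.ncard := by
  calc s.ncard ≤ (⋃ i ∈ t, f i).ncard := ncard_le_ncard hs
    _ ≤ ∑ i ∈ ht.toFinset, (f i).ncard := by simpa using ht.toFinset.set_ncard_biUnion_le f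
    _ ≤ ht.toFinset.card • n := Finset.sum_le_card_nsmul _ _ _ (by simpa using hf)
    _ = n * t.ncard := by rw [smul_eq_mul, mul_comm, ncard_eq_toFinset_card t ht]

end Set

section Forests

open SimpleGraph

variable {V : Type*} {G : SimpleGraph V} {k : ℕ} {F T : Set (Sym2 V)}

lemma IsKForestOf.ncard_add [Fintype V] (hF : IsKForestOf G k F) :
    F.ncard + k = Fintype.card V := by
  have := hF.2.1.ncard_edgeSet_add_card_connectedComponent
  rwa [edgeSet_fromEdgeSet_of_subset hF.1, hF.2.2, Nat.card_eq_fintype_card] at this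

lemma IsSpanningTreeOf.isKForestOf_one (hT : IsSpanningTreeOf G T) : IsKForestOf G 1 T := by
  have := hT.2.connected.nonempty
  have := hT.2.connected.preconnected.subsingleton_connectedComponent
  exact ⟨hT.1, hT.2.isAcyclic, Nat.card_unique⟩

lemma IsKForestOf.exists_isSpanningTreeOf_superset (hG : G.Connected) (hF : IsKForestOf G k F) :
    ∃ T, F ⊆ T ∧ IsSpanningTreeOf G T := by
  obtain ⟨T, hFT, hTG, hT⟩ := hG.exists_isTree_le_of_le_of_isAcyclic
    (G.fromEdgeSet_le.mpr (Set.sdiff_subset.trans hF.1)) hF.2.1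
  refine ⟨T.edgeSet, ?_, edgeSet_mono hTG, by rwa [fromEdgeSet_edgeSet]⟩
  simpa [edgeSet_fromEdgeSet_of_subset hF.1] using edgeSet_mono hFT

lemma IsKForestOf.exists_eq_sdiff [Fintype V] (hG : G.Connected) (hF : IsKForestOf G k F) :
    ∃ T, IsSpanningTreeOf G T ∧ ∃ D ⊆ T, D.ncard = k - 1 ∧ T \ D = F := by
  obtain ⟨T, hFT, hT⟩ := hF.exists_isSpanningTreeOf_superset hG
  refine ⟨T, hT, T \ F, Set.sdiff_subset, ?_, Set.sdiff_sdiff_cancel_left hFT⟩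
  have := hF.ncard_add
  have := hT.isKForestOf_one.ncard_add
  have := Set.ncard_le_ncard hFT
  rw [Set.ncard_sdiff hFT]
  omega

end Forests

theorem stmt5_general {V : Type*} [Fintype V] (G : SimpleGraph V) (hG : G.Connected)
    (k : ℕ) :
    {F : Set (Sym2 V) | IsKForestOf G k F}.ncard ≤
      Nat.choose (Fintype.card V - 1) (k - 1) *
        {T : Set (Sym2 V) | IsSpanningTreeOf G T}.ncard := by
  refine Set.ncard_le_mul_ncard_of_subset_biUnion (Set.toFinite _)
    (f := fun T => (T \ ·) '' {D ⊆ T | D.ncard = k - 1}) (fun F hF => ?_) (fun T hT => ?_)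
  · obtain ⟨T, hT, D, hDT, hD, rfl⟩ := hF.exists_eq_sdiff hG
    exact Set.mem_biUnion hT ⟨D, ⟨hDT, hD⟩, rfl⟩
  · calc _ ≤ {D ⊆ T | D.ncard = k - 1}.ncard := Set.ncard_image_le (Set.toFinite _)
      _ = T.ncard.choose (k - 1) := Set.ncard_powerset_ncard (Set.toFinite T) _
      _ = _ := by rw [← hT.isKForestOf_one.ncard_add, Nat.add_sub_cancel]

/-- A connected graph `G` with `N` vertices has at most `C(N−1, k−1)` times as many
`k`-forests as spanning trees. -/
theorem stmt5 {V : Type*} [Fintype V] (G : SimpleGraph V) (hG : G.Connected)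
    (k : ℕ) (hk : 1 ≤ k) :
    {F : Set (Sym2 V) | IsKForestOf G k F}.ncard ≤
      Nat.choose (Fintype.card V - 1) (k - 1) *
        {T : Set (Sym2 V) | IsSpanningTreeOf G T}.ncard :=
  stmt5_general G hG k
end

section
/- Let T be a finite tree with N vertices and let k ≥ 1 be an integer dividing N. Then there is at most one set S of k−1 edges of T such that every connected component of the forest T∖S has exactly N/k vertices. -/
/-!
Write `G` for the forest `T ∖ S` and `m` for the common size of its components. For an edge
`uv` of `T`, let `A` be the side of `u` in `T` minus `uv`. If `uv ∈ S`, then `A` is a union of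
components of `G`, so `m ∣ |A|`. If `uv ∉ S`, the component `C` of `u` in `G` contains `v`, and
since `uv` is the only edge of `T` leaving `A`, the set `A \ C` is again a union of components.
So `m ∣ |A| - |A \ C| = |A ∩ C|`, although `0 < |A ∩ C| < |C| = m` (as `u ∈ A`, `v ∉ A`).
Hence `uv ∈ S ↔ m ∣ |A|`, which determines `S` from `T` and `m` alone.
-/

namespace SimpleGraph

variable {V : Type*} {G : SimpleGraph V}

lemma dvd_ncard_of_forall_adj_mem [Finite V] {m : ℕ}
    (hm : ∀ c : G.ConnectedComponent, c.supp.ncard = m) {A : Set V}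
    (hA : ∀ ⦃x y⦄, x ∈ A → G.Adj x y → y ∈ A) : m ∣ A.ncard := by
  classical
  have : Fintype V := Fintype.ofFinite V
  have hreach : ∀ ⦃x y⦄, x ∈ A → G.Reachable x y → y ∈ A := by
    intro x y hx hxy
    rw [reachable_iff_reflTransGen] at hxy
    induction hxy with
    | refl => exact hx
    | tail _ hyz ih => exact hA ih hyz
  rw [Set.ncard_eq_toFinset_card', Finset.card_eq_sum_card_fiberwise
    (fun x hx => Finset.mem_image_of_mem G.connectedComponentMk hx)]
  refine Finset.dvd_sum fun c hc => ?_
  obtain ⟨x, hx, rfl⟩ := Finset.mem_image.mp hc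
  rw [Set.mem_toFinset] at hx
  have hfiber : {y ∈ A.toFinset | G.connectedComponentMk y = G.connectedComponentMk x}
      = (G.connectedComponentMk x).supp.toFinset := by
    ext y
    simp only [Finset.mem_filter, Set.mem_toFinset, ConnectedComponent.mem_supp_iff,
      and_iff_right_iff_imp]
    exact fun hy => hreach hx (ConnectedComponent.exact hy).symm
  rw [hfiber, ← Set.ncard_eq_toFinset_card', hm]

lemma Adj.eq_of_reachable_deleteEdges {e : Sym2 V} {u x y : V} (hxy : G.Adj x y)
    (hx : (G.deleteEdges {e}).Reachable u x) (hy : ¬(G.deleteEdges {e}).Reachable u y) :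
    s(x, y) = e := by
  by_contra hne
  exact hy (hx.trans (deleteEdges_adj.mpr ⟨hxy, hne⟩).reachable)

variable {T : SimpleGraph V} {S : Set (Sym2 V)} {m : ℕ} {u v : V}

lemma dvd_ncard_reachable_deleteEdges_of_mem [Finite V]
    (hm : ∀ c : (fromEdgeSet (T.edgeSet \ S)).ConnectedComponent, c.supp.ncard = m)
    (huv : s(u, v) ∈ S) : m ∣ {w | (T.deleteEdges {s(u, v)}).Reachable u w}.ncard := by
  refine dvd_ncard_of_forall_adj_mem hm fun x y (hx : Reachable _ u x) hxy => ?_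
  rw [fromEdgeSet_adj] at hxy
  have hne : s(x, y) ≠ s(u, v) := fun h => hxy.1.2 (h ▸ huv)
  exact hx.trans (deleteEdges_adj.mpr ⟨hxy.1.1, hne⟩).reachable

lemma IsAcyclic.mem_of_dvd_ncard_reachable_deleteEdges [Finite V] (hT : T.IsAcyclic)
    (hm : ∀ c : (fromEdgeSet (T.edgeSet \ S)).ConnectedComponent, c.supp.ncard = m)
    (huv : T.Adj u v) (hdvd : m ∣ {w | (T.deleteEdges {s(u, v)}).Reachable u w}.ncard) :
    s(u, v) ∈ S := by
  set G := fromEdgeSet (T.edgeSet \ S)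
  set A := {w | (T.deleteEdges {s(u, v)}).Reachable u w}
  set C := (G.connectedComponentMk u).supp
  by_contra huvS
  have hvA : v ∉ A := isBridge_iff.mp (isAcyclic_iff_forall_adj_isBridge.mp hT huv)
  have huC : u ∈ C := rfl
  have huvG : G.Adj u v := ⟨⟨huv, huvS⟩, huv.ne⟩
  have hvC : v ∈ C := (ConnectedComponent.connectedComponentMk_eq_of_adj huvG).symm
  have hdvd_diff : m ∣ (A \ C).ncard := by
    refine dvd_ncard_of_forall_adj_mem hm fun x y ⟨hxA, hxC⟩ hxy => ?_
    have hyC : y ∉ C := fun hyC =>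
      hxC ((ConnectedComponent.connectedComponentMk_eq_of_adj hxy).trans hyC)
    refine ⟨by_contra fun hyA => hxC ?_, hyC⟩
    have hcross := hxy.1.1.eq_of_reachable_deleteEdges hxA hyA
    rcases Sym2.eq_iff.mp hcross with ⟨rfl, -⟩ | ⟨rfl, -⟩
    exacts [huC, hvC]
  have hdvd_inter : m ∣ (A ∩ C).ncard := by
    rw [← Set.ncard_inter_add_ncard_sdiff_eq_ncard A C] at hdvd
    exact (Nat.dvd_add_left hdvd_diff).mp hdvd
  have hpos : (A ∩ C).ncard ≠ 0 :=
    Set.ncard_ne_zero_of_mem ⟨Reachable.refl u, huC⟩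
  have hlt : (A ∩ C).ncard < m := hm (G.connectedComponentMk u) ▸
    Set.ncard_lt_ncard ⟨Set.inter_subset_right, fun h => hvA (h hvC).1⟩
  exact hpos (Nat.eq_zero_of_dvd_of_lt hdvd_inter hlt)

lemma IsAcyclic.mem_iff_dvd_ncard_reachable_deleteEdges [Finite V] (hT : T.IsAcyclic)
    (hm : ∀ c : (fromEdgeSet (T.edgeSet \ S)).ConnectedComponent, c.supp.ncard = m)
    (huv : T.Adj u v) :
    s(u, v) ∈ S ↔ m ∣ {w | (T.deleteEdges {s(u, v)}).Reachable u w}.ncard :=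
  ⟨dvd_ncard_reachable_deleteEdges_of_mem hm, hT.mem_of_dvd_ncard_reachable_deleteEdges hm huv⟩

end SimpleGraph

open SimpleGraph in
theorem stmt7_general {V : Type*} [Fintype V] (T : SimpleGraph V) (hT : T.IsTree)
    (k : ℕ) :
    {S : Set (Sym2 V) | S ⊆ T.edgeSet ∧ S.ncard = k - 1 ∧
      ∀ c : (SimpleGraph.fromEdgeSet (T.edgeSet \ S)).ConnectedComponent,
        c.supp.ncard = Fintype.card V / k}.Subsingleton := by
  rintro S₁ ⟨hS₁, -, hc₁⟩ S₂ ⟨hS₂, -, hc₂⟩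
  ext e
  induction e using Sym2.ind with | _ u v => ?_
  by_cases huv : T.Adj u v
  · rw [hT.isAcyclic.mem_iff_dvd_ncard_reachable_deleteEdges hc₁ huv,
      hT.isAcyclic.mem_iff_dvd_ncard_reachable_deleteEdges hc₂ huv]
  · exact iff_of_false (fun h => huv (hS₁ h)) (fun h => huv (hS₂ h))

/-- Let `T` be a finite tree with `N` vertices and let `k ≥ 1` divide `N`.  There is at
most one set `S` of `k − 1` edges of `T` such that every connected component of the
forest `T \ S` (delete the edges of `S`, keep all vertices) has exactly `N/k` vertices. -/
theorem stmt7 {V : Type*} [Fintype V] (T : SimpleGraph V) (hT : T.IsTree)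
    (k : ℕ) (hk : 1 ≤ k) (hdvd : k ∣ Fintype.card V) :
    {S : Set (Sym2 V) | S ⊆ T.edgeSet ∧ S.ncard = k - 1 ∧
      ∀ c : (SimpleGraph.fromEdgeSet (T.edgeSet \ S)).ConnectedComponent,
        c.supp.ncard = Fintype.card V / k}.Subsingleton :=
  stmt7_general T hT k
end

section
/- There is a constant A > 0 such that the following holds for every real ε > 0 and all integers m, n ≥ 1 with m even and m > εn. Let G = {0,…,m} × {0,…,n} ⊆ ℤ². For the simple random walk on ℤ² started at (m/2, 0), the probability that the walk first exits G to a vertex (i', j') with j' = n+1 is at least 1/(A · n · e^(A/ε)). -/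
/-!
With `θ = π / (m + 2)` and `cosh α = 2 - cos θ`, the function
`φ (x, y) = sin (θ (x + 1)) sinh (α (y + 1)) / sinh (α (n + 2))` is discrete harmonic, vanishes
on the left, right and bottom parts of the outer boundary of `G` and is at most `1` on the top
part. The exit probability is superharmonic on `G`, nonnegative, and `1` on the top part, so
the maximum principle gives `φ ≤ exitProb` on `G`. At the start vertex
`φ = sinh α / sinh (α (n + 2)) ≥ 1 / ((n + 2) e^{α (n + 2)})`, and `α ≤ θ < π / (ε n)` bounds
the exponent by a multiple of `1 / ε`.

The series defining the exit probability converges by Kraft's inequality, exit paths forming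
a prefix-free code.
-/

def stepSet : Set (ℤ × ℤ) := {(1, 0), (-1, 0), (0, 1), (0, -1)}

/-- The steps `s` realise the event that the walk started at `v` first exits `A` to a vertex
of `B`; this event has probability `(1/4)^L`, `L` the length of `s`. -/
def IsExitPath (A B : Set (ℤ × ℤ)) (v : ℤ × ℤ) (s : List (ℤ × ℤ)) : Prop :=
  (∀ x ∈ s, x ∈ stepSet) ∧
  (∀ t < s.length, v + (s.take t).sum ∈ A) ∧
  v + s.sum ∉ A ∧ v + s.sum ∈ B

/-- The probability that the simple random walk on `ℤ²` started at `v` first exits `A`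
to a vertex of `B`: since the first exit time from a finite set `A` is almost surely
finite, this probability is the sum, over all exit paths `s`, of the probability
`(1/4)^length s` that the walk begins with precisely the steps of `s`. -/
noncomputable def exitProb (A B : Set (ℤ × ℤ)) (v : ℤ × ℤ) : ℝ :=
  ∑' s : {s : List (ℤ × ℤ) // IsExitPath A B v s}, ((1 : ℝ) / 4) ^ (s : List (ℤ × ℤ)).length

open InformationTheory Finset

def IsPrefixFree {α : Type*} (S : Set (List α)) : Prop :=
  ∀ s ∈ S, ∀ t ∈ S, s <+: t → s = t

namespace IsPrefixFree

variable {α : Type*} {S : Set (List α)}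

lemma mono {T : Set (List α)} (hS : IsPrefixFree S) (hTS : T ⊆ S) : IsPrefixFree T :=
  fun s hs t ht => hS s (hTS hs) t (hTS ht)

lemma uniquelyDecodable (hS : IsPrefixFree S) (hnil : [] ∉ S) : UniquelyDecodable S := by
  intro L₁ L₂ h₁ h₂ h
  induction L₁ generalizing L₂ with
  | nil =>
    obtain _ | ⟨b, L₂⟩ := L₂
    · rfl
    · simp only [List.flatten_nil, List.flatten_cons, List.nil_eq, List.append_eq_nil_iff] at h
      exact absurd (h.1 ▸ h₂ b (by simp)) hnil
  | cons a L₁ ih =>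
    obtain _ | ⟨b, L₂⟩ := L₂
    · simp only [List.flatten_nil, List.flatten_cons, List.append_eq_nil_iff] at h
      exact absurd (h.1 ▸ h₁ a (by simp)) hnil
    · simp only [List.flatten_cons] at h
      have ha := h₁ a (by simp)
      have hb := h₂ b (by simp)
      obtain rfl : a = b := by
        rcases List.prefix_or_prefix_of_prefix (List.prefix_append a _)
          (h ▸ List.prefix_append b _) with hp | hp
        exacts [hS a ha b hb hp, (hS b hb a ha hp).symm]
      rw [ih L₂ (fun w hw => h₁ w (by simp [hw])) (fun w hw => h₂ w (by simp [hw]))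
        (List.append_cancel_left h)]

/-- The code `{[]}` is prefix-free but not uniquely decodable, so it is treated apart from
Mathlib's Kraft–McMillan inequality. -/
lemma sum_pow_length_le_one [Fintype α] [Nonempty α] {S : Finset (List α)}
    (hS : IsPrefixFree (S : Set (List α))) :
    ∑ w ∈ S, (1 / Fintype.card α : ℝ) ^ w.length ≤ 1 := by
  by_cases hnil : [] ∈ S
  · have : S = {[]} := eq_singleton_iff_unique_mem.mpr
      ⟨hnil, fun s hs => (hS [] hnil s hs List.nil_prefix).symm⟩
    simp [this]
  · exact kraft_mcmillan_inequality (hS.uniquelyDecodable hnil)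

lemma summable_pow_length [Fintype α] [Nonempty α] (hS : IsPrefixFree S) :
    Summable fun s : S => (1 / Fintype.card α : ℝ) ^ s.1.length := by
  refine summable_of_sum_le (c := 1) (fun _ => by positivity) fun u => ?_
  have := sum_pow_length_le_one (hS.mono (S := S) (T := u.map (.subtype _)) (by simp))
  rwa [sum_map] at this

lemma summable_pow_length_of_forall_mem {D : Finset α} (hD : D.Nonempty) (hS : IsPrefixFree S)
    (hSD : ∀ s ∈ S, ∀ x ∈ s, x ∈ D) :
    Summable fun s : S => (1 / #D : ℝ) ^ s.1.length := by
  have : Nonempty D := hD.to_subtype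
  let T : Set (List D) := List.map Subtype.val ⁻¹' S
  have hT : IsPrefixFree T := fun s hs t ht hst =>
    List.map_injective_iff.mpr Subtype.val_injective (hS _ hs _ ht (hst.map _))
  let g : T → S := fun t => ⟨t.1.map Subtype.val, t.2⟩
  have hg : Function.Injective g := fun s t hst =>
    Subtype.ext (List.map_injective_iff.mpr Subtype.val_injective (congrArg Subtype.val hst))
  have hg_surj : ∀ s, s ∈ Set.range g := by
    rintro ⟨s, hs⟩
    lift s to List D using hSD s hs
    exact ⟨⟨s, hs⟩, rfl⟩
  refine (hg.summable_iff fun s hs => absurd (hg_surj s) hs).mp ?_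
  simpa [g, Function.comp_def, Fintype.card_coe] using hT.summable_pow_length

end IsPrefixFree

def stepFinset : Finset (ℤ × ℤ) := {(1, 0), (-1, 0), (0, 1), (0, -1)}

lemma coe_stepFinset : (stepFinset : Set (ℤ × ℤ)) = stepSet := by
  simp [stepFinset, stepSet]

lemma card_stepFinset : #stepFinset = 4 := rfl

noncomputable def stepMean (f : ℤ × ℤ → ℝ) (v : ℤ × ℤ) : ℝ :=
  (∑ d ∈ stepFinset, f (v + d)) / 4

lemma stepMean_eq (f : ℤ × ℤ → ℝ) (v : ℤ × ℤ) :
    stepMean f v = (f (v + (1, 0)) + f (v + (-1, 0)) + f (v + (0, 1)) + f (v + (0, -1))) / 4 := by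
  simp [stepMean, stepFinset, add_assoc]

lemma stepMean_sub (f g : ℤ × ℤ → ℝ) (v : ℤ × ℤ) :
    stepMean (f - g) v = stepMean f v - stepMean g v := by
  simp [stepMean, sum_sub_distrib, sub_div]

lemma stepMean_div_const (f : ℤ × ℤ → ℝ) (c : ℝ) (v : ℤ × ℤ) :
    stepMean (fun u => f u / c) v = stepMean f v / c := by
  simp [stepMean, ← sum_div, div_right_comm]

section ExitPath

variable {A B : Set (ℤ × ℤ)} {v : ℤ × ℤ}

lemma IsExitPath.nil (hA : v ∉ A) (hB : v ∈ B) : IsExitPath A B v [] :=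
  ⟨by simp, by simp, by simpa, by simpa⟩

lemma IsExitPath.cons {d : ℤ × ℤ} {s : List (ℤ × ℤ)} (hd : d ∈ stepSet) (hv : v ∈ A)
    (h : IsExitPath A B (v + d) s) : IsExitPath A B v (d :: s) := by
  obtain ⟨hsteps, hin, hout, hB⟩ := h
  refine ⟨?_, ?_, ?_, ?_⟩
  · simpa [hd] using hsteps
  · rintro (_ | t) ht
    · simpa using hv
    · simpa [add_assoc] using hin t (by simpa using ht)
  · simpa [add_assoc] using hout
  · simpa [add_assoc] using hB

lemma isPrefixFree_isExitPath : IsPrefixFree {s | IsExitPath A B v s} := by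
  intro s hs t ht hst
  by_contra hne
  have hlt : s.length < t.length := lt_of_le_of_ne hst.length_le (mt hst.eq_of_length hne)
  have hmem := ht.2.1 s.length hlt
  rw [← List.prefix_iff_eq_take.mp hst] at hmem
  exact hs.2.2.1 hmem

variable (A B v) in
lemma summable_exitPath :
    Summable fun s : {s // IsExitPath A B v s} => (1 / 4 : ℝ) ^ s.1.length := by
  have := (isPrefixFree_isExitPath (A := A) (B := B) (v := v)).summable_pow_length_of_forall_mem
    (D := stepFinset) (by simp [stepFinset])
    fun s hs x hx => by simpa [← coe_stepFinset] using hs.1 x hx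
  rwa [card_stepFinset, Nat.cast_ofNat] at this

lemma exitProb_nonneg : 0 ≤ exitProb A B v :=
  tsum_nonneg fun _ => by positivity

lemma one_le_exitProb (hA : v ∉ A) (hB : v ∈ B) : 1 ≤ exitProb A B v := by
  simpa [exitProb] using (summable_exitPath A B v).le_tsum ⟨[], .nil hA hB⟩ fun _ _ => by positivity

/-- Every exit path from a neighbour `v + d` of `v ∈ A`, prefixed by the step `d`, is an exit
path from `v`. -/
lemma stepMean_exitProb_le (hv : v ∈ A) : stepMean (exitProb A B) v ≤ exitProb A B v := by
  let f : (Σ d : stepFinset, {s // IsExitPath A B (v + d) s}) → {s // IsExitPath A B v s} :=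
    fun x => ⟨x.1.1 :: x.2.1, x.2.2.cons (coe_stepFinset ▸ x.1.2) hv⟩
  have hf : Function.Injective f := by
    rintro ⟨⟨d, hd⟩, s, hs⟩ ⟨⟨d', hd'⟩, s', hs'⟩ h
    simp only [f, Subtype.mk.injEq, List.cons.injEq] at h
    obtain ⟨rfl, rfl⟩ := h
    rfl
  have hsum := summable_exitPath A B v
  have hterm : ∀ x, (1 / 4 : ℝ) ^ (f x).1.length = (1 / 4) ^ x.2.1.length / 4 := fun x => by
    simp only [f, List.length_cons, pow_succ]
    ring
  calc stepMean (exitProb A B) v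
      = ∑' x, (1 / 4 : ℝ) ^ (f x).1.length := by
        simp only [hterm]
        rw [stepMean, Summable.tsum_sigma' (fun d => (summable_exitPath A B _).div_const 4)
          ((hsum.comp_injective hf).congr hterm), tsum_fintype, ← sum_coe_sort, sum_div]
        refine sum_congr rfl fun d _ => ?_
        rw [exitProb, tsum_div_const]
    _ ≤ exitProb A B v := tsum_comp_le_tsum_of_inj hsum (fun _ => by positivity) hf

end ExitPath

def outerBoundary (A : Set (ℤ × ℤ)) : Set (ℤ × ℤ) :=
  {u | u ∉ A ∧ ∃ d ∈ stepSet, u - d ∈ A}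

lemma add_mem_outerBoundary {A : Set (ℤ × ℤ)} {v d : ℤ × ℤ} (hv : v ∈ A) (hd : d ∈ stepSet)
    (h : v + d ∉ A) : v + d ∈ outerBoundary A :=
  ⟨h, d, hd, by simpa using hv⟩

/-- The maximum principle. At a highest point `v` among the maximisers of `w` on `A`, the step
up leads to a strictly smaller value, so `w v` exceeds the mean of its neighbours. -/
lemma nonpos_of_le_stepMean {A : Set (ℤ × ℤ)} (hA : A.Finite) {w : ℤ × ℤ → ℝ}
    (hw : ∀ v ∈ A, w v ≤ stepMean w v) (hbdry : ∀ u ∈ outerBoundary A, w u ≤ 0) :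
    ∀ v ∈ A, w v ≤ 0 := by
  by_contra! hpos
  obtain ⟨v₀, hv₀A, hv₀⟩ := hpos
  obtain ⟨v₁, hv₁A, hv₁max⟩ := A.exists_max_image w hA ⟨v₀, hv₀A⟩
  have hM : 0 < w v₁ := hv₀.trans_le (hv₁max v₀ hv₀A)
  obtain ⟨v, ⟨hvA, hvM⟩, hvtop⟩ := {u | u ∈ A ∧ w u = w v₁}.exists_max_image (·.2)
    (hA.subset fun _ hu => hu.1) ⟨v₁, hv₁A, rfl⟩
  have hle : ∀ d ∈ stepFinset, w (v + d) ≤ w v₁ := fun d hd => by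
    by_cases hvd : v + d ∈ A
    · exact hv₁max _ hvd
    · exact (hbdry _ (add_mem_outerBoundary hvA (coe_stepFinset ▸ hd) hvd)).trans hM.le
  have hlt : w (v + (0, 1)) < w v₁ := by
    by_cases hvd : v + (0, 1) ∈ A
    · refine (hv₁max _ hvd).lt_of_ne fun heq => ?_
      simpa using hvtop _ ⟨hvd, heq⟩
    · exact (hbdry _ (add_mem_outerBoundary hvA (by simp [stepSet]) hvd)).trans_lt hM
  have hsum : ∑ d ∈ stepFinset, w (v + d) < ∑ d ∈ stepFinset, w v₁ :=
    sum_lt_sum hle ⟨(0, 1), by simp [stepFinset], hlt⟩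
  have hmean := hw v hvA
  rw [stepMean] at hmean
  simp only [sum_const, card_stepFinset, nsmul_eq_mul, Nat.cast_ofNat] at hsum
  linarith

lemma le_exitProb_of_le_stepMean {A B : Set (ℤ × ℤ)} (hA : A.Finite) {φ : ℤ × ℤ → ℝ}
    (hφ : ∀ v ∈ A, φ v ≤ stepMean φ v) (hB : ∀ u ∈ outerBoundary A, u ∈ B → φ u ≤ 1)
    (hBc : ∀ u ∈ outerBoundary A, u ∉ B → φ u ≤ 0) {v : ℤ × ℤ} (hv : v ∈ A) :
    φ v ≤ exitProb A B v := by
  suffices ∀ v ∈ A, (φ - exitProb A B) v ≤ 0 by simpa [sub_nonpos] using this v hv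
  refine nonpos_of_le_stepMean hA (fun v hv => ?_) fun u hu => ?_
  · rw [stepMean_sub, Pi.sub_apply]
    linarith [hφ v hv, stepMean_exitProb_le (B := B) hv]
  · rw [Pi.sub_apply]
    by_cases huB : u ∈ B
    · linarith [hB u hu huB, one_le_exitProb hu.1 huB]
    · linarith [hBc u hu huB, exitProb_nonneg (A := A) (B := B) (v := u)]

open Real

lemma stepMean_sin_mul_sinh {θ α : ℝ} (h : cosh α = 2 - cos θ) (a b : ℝ) (v : ℤ × ℤ) :
    stepMean (fun u => sin (θ * (u.1 + a)) * sinh (α * (u.2 + b))) v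
      = sin (θ * (v.1 + a)) * sinh (α * (v.2 + b)) := by
  set x : ℝ := (v.1 : ℝ)
  set y : ℝ := (v.2 : ℝ)
  have hx : sin (θ * (x + 1 + a)) + sin (θ * (x + -1 + a)) = 2 * sin (θ * (x + a)) * cos θ := by
    rw [show θ * (x + 1 + a) = θ * (x + a) + θ by ring,
      show θ * (x + -1 + a) = θ * (x + a) - θ by ring, sin_add, sin_sub]
    ring
  have hy : sinh (α * (y + 1 + b)) + sinh (α * (y + -1 + b)) = 2 * sinh (α * (y + b)) * cosh α := by
    rw [show α * (y + 1 + b) = α * (y + b) + α by ring,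
      show α * (y + -1 + b) = α * (y + b) - α by ring, sinh_add, sinh_sub]
    ring
  rw [stepMean_eq]
  push_cast [Prod.fst_add, Prod.snd_add, add_zero]
  linear_combination (sinh (α * (y + b)) * hx + sin (θ * (x + a)) * hy
    + 2 * sin (θ * (x + a)) * sinh (α * (y + b)) * h) / 4

def grid (m n : ℕ) : Set (ℤ × ℤ) :=
  {p | 0 ≤ p.1 ∧ p.1 ≤ m ∧ 0 ≤ p.2 ∧ p.2 ≤ n}

lemma grid_finite (m n : ℕ) : (grid m n).Finite :=
  (Set.finite_Icc ((0 : ℤ), (0 : ℤ)) (m, n)).subset fun _ hp =>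
    ⟨⟨hp.1, hp.2.2.1⟩, ⟨hp.2.1, hp.2.2.2⟩⟩

lemma mem_outerBoundary_grid {m n : ℕ} {u : ℤ × ℤ} (hu : u ∈ outerBoundary (grid m n)) :
    u.1 = -1 ∨ u.1 = m + 1 ∨ u.2 = -1 ∨ u.2 = n + 1 := by
  obtain ⟨hout, d, hd, hin⟩ := hu
  simp only [grid, Set.mem_ofPred_eq] at hout hin
  rcases hd with rfl | rfl | rfl | rfl <;> simp only [Prod.fst_sub, Prod.snd_sub] at hin <;> omega

/-- The discrete harmonic function `sin (θ (x + 1)) sinh (α (y + 1))`, normalised to be `1` on the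
top side `y = n + 1`, vanishes on the other three sides of the outer boundary of the grid. -/
lemma le_exitProb_grid {m n : ℕ} {θ α : ℝ} (hθ : θ * (m + 2) = π) (hα : cosh α = 2 - cos θ)
    (hα₀ : 0 < α) {v : ℤ × ℤ} (hv : v ∈ grid m n) :
    sin (θ * (v.1 + 1)) * sinh (α * (v.2 + 1)) / sinh (α * (n + 2))
      ≤ exitProb (grid m n) {p | p.2 = n + 1} v := by
  have hZ : 0 < sinh (α * (n + 2)) := sinh_pos_iff.mpr (by positivity)
  refine le_exitProb_of_le_stepMean (grid_finite m n)
    (φ := fun u => sin (θ * (u.1 + 1)) * sinh (α * (u.2 + 1)) / sinh (α * (n + 2)))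
    (fun v _ => ?_) (fun u _ hu => ?_) (fun u hu huB => ?_) hv
  · rw [stepMean_div_const, stepMean_sin_mul_sinh hα]
  · rw [show u.2 = n + 1 from hu, mul_div_assoc]
    push_cast
    rw [add_assoc, one_add_one_eq_two, div_self hZ.ne', mul_one]
    exact sin_le_one _
  · rcases mem_outerBoundary_grid hu with h | h | h | h
    · simp [h]
    · rw [h]
      push_cast
      rw [add_assoc, one_add_one_eq_two, hθ]
      simp
    · simp [h]
    · exact absurd h huB

lemma sinh_le_mul_exp (x : ℝ) : sinh x ≤ x * exp x := by
  have h₁ : 1 - 2 * x ≤ exp (-(2 * x)) := by linarith [add_one_le_exp (-(2 * x))]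
  have h₂ : exp (-(2 * x)) * exp x = exp (-x) := by rw [← exp_add]; ring_nf
  rw [sinh_eq]
  nlinarith [exp_pos x]

lemma one_div_le_sinh_div_sinh {a N : ℝ} (ha : 0 < a) (hN : 0 < N) :
    1 / (N * exp (a * N)) ≤ sinh a / sinh (a * N) := by
  rw [div_le_div_iff₀ (by positivity) (sinh_pos_iff.mpr (by positivity))]
  calc 1 * sinh (a * N) ≤ a * (N * exp (a * N)) := by
        rw [one_mul, ← mul_assoc]; exact sinh_le_mul_exp _
    _ ≤ sinh a * (N * exp (a * N)) := by gcongr; exact self_le_sinh_iff.mpr ha.le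

lemma one_add_sq_div_two_le_cosh {x : ℝ} (hx : 0 ≤ x) : 1 + x ^ 2 / 2 ≤ cosh x := by
  have h : x / 2 ≤ sinh (x / 2) := self_le_sinh_iff.mpr (by linarith)
  have hcosh := cosh_two_mul (x / 2)
  rw [show 2 * (x / 2) = x by ring, cosh_sq] at hcosh
  nlinarith

lemma two_sub_cos_le_cosh (x : ℝ) : 2 - cos x ≤ cosh x := by
  rw [← cos_abs, ← cosh_abs]
  linarith [one_add_sq_div_two_le_cosh (abs_nonneg x), one_sub_sq_div_two_le_cos (x := |x|)]

lemma arcosh_two_sub_cos_le {θ : ℝ} (hθ : 0 ≤ θ) : arcosh (2 - cos θ) ≤ θ :=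
  calc arcosh (2 - cos θ) ≤ arcosh (cosh θ) :=
        (arcosh_le_arcosh (by linarith [cos_le_one θ]) (cosh_pos θ)).mpr (two_sub_cos_le_cosh θ)
    _ = θ := arcosh_cosh hθ

lemma mul_exp_le_of_lt {ε α : ℝ} {m n : ℕ} (hε : 0 < ε) (hn : 1 ≤ n) (hmn : ε * n < m)
    (hα : α ≤ π / (m + 2)) : (n + 2) * exp (α * (n + 2)) ≤ 10 * n * exp (10 / ε) := by
  have hn' : (1 : ℝ) ≤ n := by exact_mod_cast hn
  have hαn : α * (n + 2) ≤ 10 / ε := by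
    calc α * (n + 2) ≤ π / (m + 2) * (n + 2) := by gcongr
      _ ≤ 10 / ε := by
        rw [div_mul_eq_mul_div, div_le_div_iff₀ (by positivity) hε]
        -- `n + 2 ≤ 3 n`, `ε n < m` and `3 π < 10`
        nlinarith [pi_lt_d2, pi_pos, mul_le_mul_of_nonneg_left hn' (mul_pos pi_pos hε).le]
  gcongr
  linarith

/-- There is a constant `A > 0` such that for every `ε > 0` and all `m, n ≥ 1` with `m`
even and `m > εn`, the simple random walk on `ℤ²` started at `(m/2, 0)` first exits
`G = {0,…,m} × {0,…,n}` to a vertex `(i', j')` with `j' = n+1` with probability at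
least `1/(A n e^(A/ε))`. -/
theorem stmt10 :
    ∃ A : ℝ, 0 < A ∧ ∀ ε : ℝ, 0 < ε → ∀ m n : ℕ, 1 ≤ m → 1 ≤ n → Even m →
      (m : ℝ) > ε * n →
      exitProb {p : ℤ × ℤ | 0 ≤ p.1 ∧ p.1 ≤ m ∧ 0 ≤ p.2 ∧ p.2 ≤ n}
          {p : ℤ × ℤ | p.2 = (n : ℤ) + 1} ((m : ℤ) / 2, 0) ≥
        1 / (A * n * Real.exp (A / ε)) := by
  refine ⟨10, by norm_num, fun ε hε m n _ hn ⟨k, hk⟩ hmn => ?_⟩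
  set θ := π / (m + 2)
  set α := arcosh (2 - cos θ)
  have hθ : θ * (m + 2) = π := div_mul_cancel₀ π (by positivity)
  have hcos : cos θ < 1 := by
    simpa using cos_lt_cos_of_nonneg_of_le_pi le_rfl
      (div_le_self pi_pos.le (by linarith)) (by positivity : 0 < θ)
  have hα : cosh α = 2 - cos θ := cosh_arcosh (by linarith)
  have hα₀ : 0 < α := arcosh_pos (by linarith)
  have hstart : ((m : ℤ) / 2, (0 : ℤ)) ∈ grid m n := by
    refine ⟨?_, ?_, le_rfl, ?_⟩ <;> omega
  have hsin : sin (θ * ((((m : ℤ) / 2 : ℤ) : ℝ) + 1)) = 1 := by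
    have hm : (m : ℝ) + 2 = 2 * (k + 1) := by push_cast [hk]; ring
    rw [show (m : ℤ) / 2 = k by omega, Int.cast_natCast,
      show θ * (k + 1) = π / 2 by linear_combination hθ / 2 - θ / 2 * hm, sin_pi_div_two]
  calc 1 / (10 * n * exp (10 / ε))
      ≤ 1 / ((n + 2) * exp (α * (n + 2))) := by
        refine one_div_le_one_div_of_le (by positivity) ?_
        exact mul_exp_le_of_lt hε hn hmn (arcosh_two_sub_cos_le (by positivity))
    _ ≤ sinh α / sinh (α * (n + 2)) := one_div_le_sinh_div_sinh hα₀ (by positivity)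
    _ = sin (θ * ((((m : ℤ) / 2 : ℤ) : ℝ) + 1)) * sinh (α * (((0 : ℤ) : ℝ) + 1))
          / sinh (α * (n + 2)) := by rw [hsin]; simp
    _ ≤ _ := le_exitProb_grid (v := ((m : ℤ) / 2, 0)) hθ hα hα₀ hstart
end

section
/- For every integer n ≥ 1, the number of sequences s ∈ {−1, +1}^(2n²) for which some partial sum s_1 + s_2 + ⋯ + s_t (for some 1 ≤ t ≤ 2n²) equals n is at least 2^(2n²)/4. Equivalently, a simple random walk on ℤ started at 0 reaches the point n within 2n² steps with probability at least 1/4. -/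
/-!
Reflection principle. Reflecting the steps of a walk after its first visit to `n` is an
involution on the walks that visit `n` and sends a final position `S_L > n` to `2n - S_L < n`,
so at least `#{S_L ≥ n} + #{S_L > n} = #{S_L ≥ n} + #{S_L < -n}` walks visit `n` (flipping every
step gives the equality). Hence all but at most `#{-n ≤ S_L < n}` walks visit `n`. Since
`S_L = 2j - L` for a walk with `j` up-steps, only `n` values of `j` are possible here, each for at
most `C(L, L/2)` walks; for `L = 2n²` the bound `(2m+1) C(2m, m)² ≤ 16^m` then gives
`n C(2n², n²) ≤ 3/4 · 2^(2n²)`.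
-/

open Finset

theorem Nat.two_mul_add_one_mul_sq_centralBinom_le (m : ℕ) :
    (2 * m + 1) * m.centralBinom ^ 2 ≤ 16 ^ m := by
  induction m with
  | zero => simp
  | succ m ih =>
    refine Nat.le_of_mul_le_mul_left ?_ (by positivity : 0 < (m + 1) ^ 2)
    calc (m + 1) ^ 2 * ((2 * (m + 1) + 1) * (m + 1).centralBinom ^ 2)
        = (2 * m + 3) * ((m + 1) * (m + 1).centralBinom) ^ 2 := by ring
      _ = (2 * m + 3) * (4 * (2 * m + 1)) * ((2 * m + 1) * m.centralBinom ^ 2) := by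
          rw [Nat.succ_mul_centralBinom_succ]; ring
      _ ≤ 16 * (m + 1) ^ 2 * 16 ^ m := Nat.mul_le_mul (by nlinarith) ih
      _ = (m + 1) ^ 2 * 16 ^ (m + 1) := by ring

theorem Nat.four_mul_mul_centralBinom_sq_le (n : ℕ) :
    4 * n * (n ^ 2).centralBinom ≤ 3 * 2 ^ (2 * n ^ 2) := by
  have h := Nat.two_mul_add_one_mul_sq_centralBinom_le (n ^ 2)
  have h16 : 16 ^ n ^ 2 = (2 ^ (2 * n ^ 2)) ^ 2 := by
    rw [← pow_mul, show 16 = 2 ^ 4 by rfl, ← pow_mul]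
    ring_nf
  refine (Nat.pow_le_pow_iff_left two_ne_zero).mp ?_
  calc (4 * n * (n ^ 2).centralBinom) ^ 2
      = 8 * (2 * n ^ 2 * (n ^ 2).centralBinom ^ 2) := by ring
    _ ≤ 8 * 16 ^ n ^ 2 := Nat.mul_le_mul_left 8 (le_trans (by gcongr; omega) h)
    _ ≤ (3 * 2 ^ (2 * n ^ 2)) ^ 2 := by rw [h16, mul_pow]; omega

namespace SimpleRandomWalk

variable {L : ℕ}

def step (b : Bool) : ℤ := if b then 1 else -1

lemma step_eq_one_or_neg_one (b : Bool) : step b = 1 ∨ step b = -1 := by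
  cases b <;> simp [step]

lemma step_not (b : Bool) : step (!b) = -step b := by
  cases b <;> rfl

def walk (s : Fin L → Bool) (k : ℕ) : ℤ := ∑ i with i.val < k, step (s i)

lemma walk_zero (s : Fin L → Bool) : walk s 0 = 0 := by
  simp [walk]

lemma walk_succ_of_lt (s : Fin L → Bool) {k : ℕ} (hk : k < L) :
    walk s (k + 1) = walk s k + step (s ⟨k, hk⟩) := by
  have hfilter : univ.filter (fun i : Fin L => i.val < k + 1) =
      insert ⟨k, hk⟩ (univ.filter fun i : Fin L => i.val < k) := by
    ext i
    simp only [mem_insert, mem_filter, mem_univ, true_and, Fin.ext_iff]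
    omega
  rw [walk, hfilter, sum_insert (by simp), add_comm]
  rfl

lemma walk_of_length_le (s : Fin L → Bool) {k : ℕ} (hk : L ≤ k) : walk s k = walk s L := by
  have hfilter (m : ℕ) (hm : L ≤ m) : univ.filter (fun i : Fin L => i.val < m) = univ := by
    ext i
    simpa using i.isLt.trans_le hm
  rw [walk, walk, hfilter k hk, hfilter L le_rfl]

lemma walk_succ_of_length_le (s : Fin L → Bool) {k : ℕ} (hk : L ≤ k) :
    walk s (k + 1) = walk s k := by
  rw [walk_of_length_le s hk, walk_of_length_le s (hk.trans k.le_succ)]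

lemma exists_walk_eq_of_le_walk (s : Fin L → Bool) {v : ℤ} (hv : 0 ≤ v) {k : ℕ}
    (h : v ≤ walk s k) : ∃ j ≤ k, walk s j = v := by
  induction k with
  | zero => exact ⟨0, le_rfl, by rw [walk_zero] at h ⊢; omega⟩
  | succ k ih =>
    by_cases hk : v ≤ walk s k
    · obtain ⟨j, hjk, hj⟩ := ih hk
      exact ⟨j, hjk.trans k.le_succ, hj⟩
    refine ⟨k + 1, le_rfl, ?_⟩
    rcases lt_or_ge k L with hkL | hkL
    · rw [walk_succ_of_lt s hkL] at h ⊢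
      rcases step_eq_one_or_neg_one (s ⟨k, hkL⟩) with h' | h' <;> omega
    · rw [walk_succ_of_length_le s hkL] at h
      omega

lemma sum_step_le_eq_walk (s : Fin L → Bool) (t : Fin L) :
    ∑ i with i ≤ t, step (s i) = walk s (t + 1) := by
  refine sum_congr (filter_congr fun i _ => ?_) fun _ _ => rfl
  rw [Fin.le_def]
  omega

lemma exists_walk_succ_eq_iff {v : ℤ} (hv : v ≠ 0) (s : Fin L → Bool) :
    (∃ t : Fin L, walk s (t + 1) = v) ↔ ∃ k, walk s k = v := by
  refine ⟨fun ⟨t, ht⟩ => ⟨t + 1, ht⟩, fun ⟨k, hk⟩ => ?_⟩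
  have hk0 : k ≠ 0 := by rintro rfl; exact hv (by rw [← hk, walk_zero])
  rcases le_or_gt k L with hkL | hLk
  · exact ⟨⟨k - 1, by omega⟩, by rwa [Nat.sub_add_cancel (Nat.one_le_iff_ne_zero.mpr hk0)]⟩
  · have hL0 : L ≠ 0 := by
      rintro rfl
      exact hv (by rw [← hk, walk_of_length_le s k.zero_le, walk_zero])
    exact ⟨⟨L - 1, by omega⟩, by rwa [Nat.sub_add_cancel (Nat.one_le_iff_ne_zero.mpr hL0),
      ← walk_of_length_le s hLk.le]⟩

def reflectFrom (τ : ℕ) (s : Fin L → Bool) : Fin L → Bool :=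
  fun i => if τ ≤ i then !s i else s i

lemma reflectFrom_reflectFrom (τ : ℕ) (s : Fin L → Bool) :
    reflectFrom τ (reflectFrom τ s) = s := by
  funext i
  by_cases hi : τ ≤ (i : ℕ) <;> simp [reflectFrom, hi]

lemma walk_reflectFrom_of_le (τ : ℕ) (s : Fin L → Bool) {k : ℕ} (hk : k ≤ τ) :
    walk (reflectFrom τ s) k = walk s k := by
  refine sum_congr rfl fun i hi => ?_
  have : ¬τ ≤ (i : ℕ) := by simp only [mem_filter, mem_univ, true_and] at hi; omega
  simp [reflectFrom, this]

lemma walk_reflectFrom_of_ge (τ : ℕ) (s : Fin L → Bool) {k : ℕ} (hk : τ ≤ k) :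
    walk (reflectFrom τ s) k = 2 * walk s τ - walk s k := by
  induction k, hk using Nat.le_induction with
  | base => rw [walk_reflectFrom_of_le τ s le_rfl]; ring
  | succ k hτk ih =>
    rcases lt_or_ge k L with hkL | hkL
    · rw [walk_succ_of_lt _ hkL, walk_succ_of_lt _ hkL, ih, reflectFrom, if_pos hτk, step_not]
      ring
    · rw [walk_succ_of_length_le _ hkL, walk_succ_of_length_le _ hkL, ih]

lemma walk_reflectFrom_zero (s : Fin L → Bool) (k : ℕ) :
    walk (reflectFrom 0 s) k = -walk s k := by
  rw [walk_reflectFrom_of_ge 0 s k.zero_le, walk_zero]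
  ring

-- `sInf ∅ = 0`: `hitTime v s` is only meaningful when the walk `s` visits `v`.
noncomputable def hitTime (v : ℤ) (s : Fin L → Bool) : ℕ := sInf {k | walk s k = v}

lemma walk_hitTime {v : ℤ} {s : Fin L → Bool} (h : ∃ k, walk s k = v) :
    walk s (hitTime v s) = v :=
  Nat.sInf_mem h

lemma hitTime_le {v : ℤ} {s : Fin L → Bool} {k : ℕ} (h : walk s k = v) : hitTime v s ≤ k :=
  Nat.sInf_le h

lemma hitTime_reflectFrom_hitTime {v : ℤ} {s : Fin L → Bool} (h : ∃ k, walk s k = v) :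
    hitTime v (reflectFrom (hitTime v s) s) = hitTime v s := by
  set τ := hitTime v s
  have hτ : walk (reflectFrom τ s) τ = v := by
    rw [walk_reflectFrom_of_le τ s le_rfl, walk_hitTime h]
  refine (hitTime_le hτ).antisymm (not_lt.mp fun hlt => ?_)
  have hhit := walk_hitTime ⟨τ, hτ⟩
  rw [walk_reflectFrom_of_le τ s hlt.le] at hhit
  exact Nat.notMem_of_lt_sInf hlt hhit

noncomputable def reflect (v : ℤ) (s : Fin L → Bool) : Fin L → Bool :=
  reflectFrom (hitTime v s) s

lemma reflect_reflect {v : ℤ} {s : Fin L → Bool} (h : ∃ k, walk s k = v) :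
    reflect v (reflect v s) = s := by
  rw [reflect, reflect, hitTime_reflectFrom_hitTime h, reflectFrom_reflectFrom]

open scoped Classical in
lemma card_walk_gt_le_card_hit_walk_lt {v : ℤ} (hv : 0 ≤ v) :
    #{s : Fin L → Bool | v < walk s L} ≤
      #{s : Fin L → Bool | (∃ k, walk s k = v) ∧ walk s L < v} := by
  have hit (s : Fin L → Bool) (hs : v < walk s L) : ∃ k, walk s k = v := by
    obtain ⟨k, -, hk⟩ := exists_walk_eq_of_le_walk s hv hs.le
    exact ⟨k, hk⟩
  refine card_le_card_of_injOn (reflect v) (fun s hs => ?_) (fun s₁ hs₁ s₂ hs₂ heq => ?_)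
  · simp only [mem_coe, mem_filter, mem_univ, true_and] at hs ⊢
    obtain ⟨k, hkL, hk⟩ := exists_walk_eq_of_le_walk s hv hs.le
    have hτ : hitTime v s ≤ L := (hitTime_le hk).trans hkL
    refine ⟨⟨hitTime v s, ?_⟩, ?_⟩
    · rw [reflect, walk_reflectFrom_of_le _ _ le_rfl, walk_hitTime ⟨k, hk⟩]
    · rw [reflect, walk_reflectFrom_of_ge _ _ hτ, walk_hitTime ⟨k, hk⟩]
      linarith
  · simp only [mem_coe, mem_filter, mem_univ, true_and] at hs₁ hs₂
    rw [← reflect_reflect (hit s₁ hs₁), heq, reflect_reflect (hit s₂ hs₂)]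

open scoped Classical in
lemma card_walk_ge_add_card_walk_gt_le_card_hit {v : ℤ} (hv : 0 ≤ v) :
    #{s : Fin L → Bool | v ≤ walk s L} + #{s : Fin L → Bool | v < walk s L} ≤
      #{s : Fin L → Bool | ∃ k, walk s k = v} := by
  calc _ ≤ #{s : Fin L → Bool | v ≤ walk s L} +
        #{s : Fin L → Bool | (∃ k, walk s k = v) ∧ walk s L < v} :=
        Nat.add_le_add_left (card_walk_gt_le_card_hit_walk_lt hv) _
    _ = #(({s | v ≤ walk s L} : Finset (Fin L → Bool)) ∪
        ({s | (∃ k, walk s k = v) ∧ walk s L < v} : Finset (Fin L → Bool))) := by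
        refine (card_union_of_disjoint (disjoint_filter.mpr fun s _ h h' => ?_)).symm
        linarith [h'.2]
    _ ≤ _ := by
        refine card_le_card fun s hs => ?_
        simp only [mem_union, mem_filter, mem_univ, true_and] at hs ⊢
        rcases hs with hs | hs
        · obtain ⟨k, -, hk⟩ := exists_walk_eq_of_le_walk s hv hs
          exact ⟨k, hk⟩
        · exact hs.1

lemma card_walk_gt_eq_card_walk_lt_neg (v : ℤ) :
    #{s : Fin L → Bool | v < walk s L} = #{s : Fin L → Bool | walk s L < -v} := by
  refine card_nbij' (reflectFrom 0) (reflectFrom 0) (fun s hs => ?_) (fun s hs => ?_)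
    (fun s _ => reflectFrom_reflectFrom 0 s) (fun s _ => reflectFrom_reflectFrom 0 s)
  all_goals
    simp only [mem_coe, mem_filter, mem_univ, true_and, walk_reflectFrom_zero] at hs ⊢
    linarith

open scoped Classical in
lemma two_pow_le_card_hit_add_card_walk_mem_Ico {v : ℤ} (hv : 0 ≤ v) :
    2 ^ L ≤ #{s : Fin L → Bool | ∃ k, walk s k = v} +
      #{s : Fin L → Bool | -v ≤ walk s L ∧ walk s L < v} := by
  calc 2 ^ L = #(univ : Finset (Fin L → Bool)) := by simp
    _ ≤ #(({s | v ≤ walk s L} : Finset (Fin L → Bool)) ∪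
          ({s | walk s L < -v} : Finset (Fin L → Bool)) ∪
          ({s | -v ≤ walk s L ∧ walk s L < v} : Finset (Fin L → Bool))) := by
        refine card_le_card fun s _ => ?_
        simp only [mem_union, mem_filter, mem_univ, true_and]
        omega
    _ ≤ #{s : Fin L → Bool | v ≤ walk s L} + #{s : Fin L → Bool | walk s L < -v} +
          #{s : Fin L → Bool | -v ≤ walk s L ∧ walk s L < v} :=
        (card_union_le _ _).trans (Nat.add_le_add_right (card_union_le _ _) _)
    _ ≤ _ := by
        rw [← card_walk_gt_eq_card_walk_lt_neg]
        gcongr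
        exact card_walk_ge_add_card_walk_gt_le_card_hit hv

def upCount (s : Fin L → Bool) : ℕ := #{i | s i}

lemma walk_length_eq_two_mul_upCount_sub (s : Fin L → Bool) :
    walk s L = 2 * upCount s - L := by
  have hstep (b : Bool) : step b = 2 * (if b then 1 else 0) - 1 := by cases b <;> simp [step]
  have hfilter : univ.filter (fun i : Fin L => i.val < L) = univ := by
    ext i
    simp
  rw [walk, hfilter, sum_congr rfl fun i _ => hstep (s i), sum_sub_distrib, ← mul_sum,
    sum_boole, upCount]
  simp

lemma card_upCount_eq_le (j : ℕ) : #{s : Fin L → Bool | upCount s = j} ≤ L.choose j := by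
  calc _ ≤ #(powersetCard j (univ : Finset (Fin L))) := by
        refine card_le_card_of_injOn (fun s => ({i | s i} : Finset (Fin L))) (fun s hs => ?_)
          (fun s₁ _ s₂ _ heq => funext fun i => ?_)
        · simp only [mem_coe, mem_filter, mem_univ, true_and] at hs
          simpa [mem_powersetCard, upCount] using hs
        · simpa using congrArg (i ∈ ·) heq
    _ = L.choose j := by simp

lemma card_walk_mem_Ico_le (v : ℕ) :
    #{s : Fin L → Bool | -(v : ℤ) ≤ walk s L ∧ walk s L < v} ≤ L.choose (L / 2) * v := by
  -- `-v ≤ 2j - L < v` iff `⌈(L - v) / 2⌉ ≤ j < ⌈(L + v) / 2⌉`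
  calc _ ≤ L.choose (L / 2) * #(Ico ((L - v + 1) / 2) ((L + v + 1) / 2)) := by
        refine card_le_mul_card_image_of_maps_to (f := upCount) (fun s hs => ?_) _
          fun j _ => ?_
        · simp only [mem_filter, mem_univ, true_and, walk_length_eq_two_mul_upCount_sub] at hs
          simp only [mem_Ico]
          omega
        · calc _ ≤ #{s : Fin L → Bool | upCount s = j} :=
                card_le_card (filter_subset_filter _ (filter_subset _ _))
            _ ≤ L.choose j := card_upCount_eq_le j
            _ ≤ L.choose (L / 2) := Nat.choose_le_middle j L
    _ ≤ _ := by
        rw [Nat.card_Ico]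
        gcongr
        omega

end SimpleRandomWalk

open SimpleRandomWalk in
/-- For every `n ≥ 1`, the number of `±1`-sequences of length `2n²` some of whose
partial sums equals `n` is at least `2^(2n²)/4`.  (A sequence `s : Fin (2n²) → Bool`
encodes the increments, `true ↦ +1` and `false ↦ −1`; the partial sum
`s₁ + ⋯ + s_t` is the sum of the increments with index `≤ t`.)  Equivalently, a simple
random walk on `ℤ` started at `0` reaches `n` within `2n²` steps with probability at
least `1/4`. -/
theorem stmt12 (n : ℕ) (hn : 1 ≤ n) :
    2 ^ (2 * n ^ 2) ≤ 4 *
      {s : Fin (2 * n ^ 2) → Bool | ∃ t : Fin (2 * n ^ 2),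
        (∑ i ∈ Finset.univ.filter (fun i => i ≤ t),
          (if s i then (1 : ℤ) else -1)) = n}.ncard := by
  classical
  have hA : {s : Fin (2 * n ^ 2) → Bool | ∃ t : Fin (2 * n ^ 2),
      (∑ i ∈ Finset.univ.filter (fun i => i ≤ t), (if s i then (1 : ℤ) else -1)) = n} =
      {s | ∃ k, walk s k = n} := by
    ext s
    simp only [Set.mem_ofPred_eq, ← exists_walk_succ_eq_iff (by omega : (n : ℤ) ≠ 0),
      ← sum_step_le_eq_walk]
    rfl
  rw [hA, Set.ncard_eq_toFinset_card', Set.toFinset_ofPred]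
  have hhit :=
    two_pow_le_card_hit_add_card_walk_mem_Ico (L := 2 * n ^ 2) (Int.natCast_nonneg n)
  have hmid := card_walk_mem_Ico_le (L := 2 * n ^ 2) n
  rw [show 2 * n ^ 2 / 2 = n ^ 2 by omega, ← Nat.centralBinom_eq_two_mul_choose] at hmid
  have hbinom := Nat.four_mul_mul_centralBinom_sq_le n
  linarith
end

section
/- Let K ⊆ ℝ² be a compact set and let U be a bounded connected component of ℝ² ∖ K. For every ε > 0 there exists δ > 0 such that any two points p, q ∈ U whose Euclidean distance to K is at least ε can be joined by a continuous path γ : [0,1] → ℝ² with γ(0) = p, γ(1) = q, and with the Euclidean distance from γ(t) to K at least δ for every t ∈ [0,1]. -/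
open Metric Set

/-- Let `K ⊆ ℝ²` be compact and let `U` be a bounded connected component of `ℝ² \ K`.
For every `ε > 0` there is `δ > 0` such that any two points `p, q ∈ U` at distance at
least `ε` from `K` are joined by a continuous path in `ℝ²` staying at distance at
least `δ` from `K`. -/
theorem stmt15 (K : Set (EuclideanSpace ℝ (Fin 2))) (hK : IsCompact K)
    (U : Set (EuclideanSpace ℝ (Fin 2))) (hUbdd : Bornology.IsBounded U)
    (hUcomp : ∃ x ∈ Kᶜ, U = connectedComponentIn Kᶜ x) :
    ∀ ε : ℝ, 0 < ε → ∃ δ : ℝ, 0 < δ ∧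
      ∀ p ∈ U, ∀ q ∈ U, ε ≤ Metric.infDist p K → ε ≤ Metric.infDist q K →
        ∃ γ : Path p q, ∀ t : unitInterval, δ ≤ Metric.infDist (γ t) K := by
  intro ε hε
  obtain ⟨x₀, hx₀, hUeq⟩ := hUcomp
  -- K empty: hypotheses are vacuous
  rcases K.eq_empty_or_nonempty with hKe | hKne
  · refine ⟨1, one_pos, fun p hp q hq hpd hqd => absurd hpd ?_⟩
    rw [hKe, Metric.infDist_empty]; linarith
  have hKc : IsOpen Kᶜ := hK.isClosed.isOpen_compl
  have hUopen : IsOpen U := hUeq ▸ hKc.connectedComponentIn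
  have hUconn : IsConnected U := hUeq ▸ isConnected_connectedComponentIn_iff.2 hx₀
  have hUpc : IsPathConnected U := (hUopen.isConnected_iff_isPathConnected).1 hUconn
  have hUK : U ⊆ Kᶜ := hUeq ▸ connectedComponentIn_subset _ _
  -- the compact set A
  set A : Set (EuclideanSpace ℝ (Fin 2)) :=
    closure U ∩ {x | ε ≤ infDist x K} with hA
  have hAcomp : IsCompact A :=
    hUbdd.isCompact_closure.inter_right
      (isClosed_le continuous_const (continuous_infDist_pt K))
  have hAU : A ⊆ U := by
    rintro x ⟨hxc, hxd⟩
    have hball : ball x ε ⊆ Kᶜ := by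
      intro y hy hyK
      have h1 : infDist x K ≤ dist x y := Metric.infDist_le_dist_of_mem hyK
      rw [mem_ball, dist_comm] at hy
      simp only [mem_setOf_eq] at hxd
      linarith
    obtain ⟨u, huU, hud⟩ := Metric.mem_closure_iff.1 hxc ε hε
    have hxball : x ∈ ball x ε := mem_ball_self hε
    have huball : u ∈ ball x ε := by rwa [mem_ball, dist_comm]
    have hsub : ball x ε ⊆ connectedComponentIn Kᶜ u :=
      ((convex_ball x ε).isPreconnected).subset_connectedComponentIn huball hball
    have : connectedComponentIn Kᶜ x₀ = connectedComponentIn Kᶜ u :=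
      connectedComponentIn_eq (by rw [← hUeq]; exact huU)
    rw [hUeq, this]
    exact hsub hxball
  -- If A is empty, vacuous
  rcases A.eq_empty_or_nonempty with hAe | ⟨a₀, ha₀⟩
  · refine ⟨1, one_pos, fun p hp q hq hpd hqd => ?_⟩
    exact absurd (show p ∈ A from ⟨subset_closure hp, hpd⟩) (by rw [hAe]; simp)
  have ha₀U : a₀ ∈ U := hAU ha₀
  -- for every x ∈ U, a path to a₀ bounded away from K
  have key : ∀ x ∈ U, ∃ c : ℝ, 0 < c ∧ ∃ γ : Path x a₀,
      ∀ s : unitInterval, c ≤ infDist (γ s) K := by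
    intro x hx
    obtain ⟨γ, hγ⟩ := hUpc.joinedIn x hx a₀ ha₀U
    have hcont : Continuous fun s : unitInterval => infDist (γ s) K :=
      (continuous_infDist_pt K).comp γ.continuous
    obtain ⟨s₀, -, hs₀⟩ := isCompact_univ.exists_isMinOn univ_nonempty hcont.continuousOn
    refine ⟨infDist (γ s₀) K, ?_, γ, fun s => hs₀ (mem_univ s)⟩
    exact (hK.isClosed.notMem_iff_infDist_pos hKne).1 (hUK (hγ s₀))
  classical
  set c : EuclideanSpace ℝ (Fin 2) → ℝ :=
    fun x => if h : x ∈ U then (key x h).choose else 1 with hc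
  have hcpos : ∀ x ∈ U, 0 < c x := by
    intro x hx; rw [hc]; simp only [hx, dif_pos]; exact (key x hx).choose_spec.1
  have hcpath : ∀ x (hx : x ∈ U), ∃ γ : Path x a₀,
      ∀ s : unitInterval, c x ≤ infDist (γ s) K := by
    intro x hx; rw [hc]; simp only [hx, dif_pos]; exact (key x hx).choose_spec.2
  -- finite subcover of A by ε/2-balls
  obtain ⟨t, htA, htcover⟩ := hAcomp.elim_nhds_subcover (fun x => ball x (ε / 2))
    (fun x _ => ball_mem_nhds x (by linarith))
  have htne : t.Nonempty := by
    rcases Finset.eq_empty_or_nonempty t with h | h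
    · exfalso; have := htcover ha₀; rw [h] at this; simp at this
    · exact h
  set δ : ℝ := min (ε / 2) (t.inf' htne c) with hδ
  have hδpos : 0 < δ := by
    apply lt_min (by linarith)
    apply (Finset.lt_inf'_iff _).2
    intro x hx
    exact hcpos x (hAU (htA x hx))
  refine ⟨δ, hδpos, fun p hp q hq hpd hqd => ?_⟩
  have hpA : p ∈ A := ⟨subset_closure hp, hpd⟩
  have hqA : q ∈ A := ⟨subset_closure hq, hqd⟩
  obtain ⟨xp, hxpmem, hpball⟩ := mem_iUnion₂.1 (htcover hpA)
  obtain ⟨xq, hxqmem, hqball⟩ := mem_iUnion₂.1 (htcover hqA)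
  have hxpU : xp ∈ U := hAU (htA xp hxpmem)
  have hxqU : xq ∈ U := hAU (htA xq hxqmem)
  -- balls around xp, xq are far from K
  have hballfar : ∀ x : EuclideanSpace ℝ (Fin 2), ε ≤ infDist x K →
      ∀ y ∈ ball x (ε / 2), δ ≤ infDist y K := by
    intro x hx y hy
    have h1 : infDist x K ≤ infDist y K + dist x y := Metric.infDist_le_infDist_add_dist
    have h2 : dist x y < ε / 2 := by rw [dist_comm]; exact mem_ball.1 hy
    have : ε / 2 ≤ infDist y K := by linarith
    exact le_trans (min_le_left _ _) this
  have hxpd : ε ≤ infDist xp K := (htA xp hxpmem).2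
  have hxqd : ε ≤ infDist xq K := (htA xq hxqmem).2
  -- segments within balls
  have hballpc : ∀ x : EuclideanSpace ℝ (Fin 2), IsPathConnected (ball x (ε / 2)) :=
    fun x => (convex_ball x (ε / 2)).isPathConnected ⟨x, mem_ball_self (by linarith)⟩
  obtain ⟨γ₁, hγ₁⟩ := (hballpc xp).joinedIn p hpball xp (mem_ball_self (by linarith))
  obtain ⟨γ₄, hγ₄⟩ := (hballpc xq).joinedIn xq (mem_ball_self (by linarith)) q hqball
  obtain ⟨γ₂, hγ₂⟩ := hcpath xp hxpU
  obtain ⟨γ₃, hγ₃⟩ := hcpath xq hxqU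
  refine ⟨γ₁.trans (γ₂.trans (γ₃.symm.trans γ₄)), fun s => ?_⟩
  have hs : (γ₁.trans (γ₂.trans (γ₃.symm.trans γ₄))) s ∈
      range ⇑γ₁ ∪ (range ⇑γ₂ ∪ (range ⇑γ₃.symm ∪ range ⇑γ₄)) := by
    rw [← Path.trans_range, ← Path.trans_range, ← Path.trans_range]
    exact mem_range_self s
  have hinf_le : ∀ x ∈ t, δ ≤ c x := fun x hx =>
    le_trans (min_le_right _ _) (Finset.inf'_le c hx)
  rcases hs with h | h | h | h
  · obtain ⟨s', hs'⟩ := h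
    rw [← hs']
    exact hballfar xp hxpd _ (hγ₁ s')
  · obtain ⟨s', hs'⟩ := h
    rw [← hs']
    exact le_trans (hinf_le xp hxpmem) (hγ₂ s')
  · obtain ⟨s', hs'⟩ := h
    rw [← hs']
    rw [Path.symm_apply]
    exact le_trans (hinf_le xq hxqmem) (hγ₃ _)
  · obtain ⟨s', hs'⟩ := h
    rw [← hs']
    exact hballfar xq hxqd _ (hγ₄ s')
end
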